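/- arXiv:1608.00624 — 3 statements merged into one kernel-verified Lean document; each statement's English description precedes it below -/
import Mathlib

section
/- Consider the penalized estimators β̂^λ ∈ argmin_{β∈ℝᵖ} { g(‖Y − Xβ‖₂²) + Σ_{j=1}^k λⱼ‖Mⱼβ‖_{qⱼ} }. Assume that for each λ ∈ (0,∞)^k the set of minimizers is nonempty and let λ ↦ β̂(λ) be any function selecting a minimizer for each λ. Then the functions (0,∞)^k → ℝ given by λ ↦ g(‖Y − Xβ̂(λ)‖₂²) and λ ↦ ‖Y − Xβ̂(λ)‖₂² are both continuous (with (0,∞)^k equipped with the Euclidean metric). -/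
open Matrix
open scoped BigOperators ENNReal Classical

/-- Squared Euclidean norm of a vector. -/
noncomputable def sqNorm {n : ℕ} (v : Fin n → ℝ) : ℝ := ∑ i, (v i) ^ 2

/-- The ℓ_q norm on ℝ^p for an exponent q ∈ [1,∞] (given as an `ℝ≥0∞`). -/
noncomputable def lqNorm {p : ℕ} (q : ℝ≥0∞) (v : Fin p → ℝ) : ℝ :=
  if q = ∞ then ⨆ i, |v i| else (∑ i, |v i| ^ q.toReal) ^ (1 / q.toReal)

/-- The conjugate (dual) exponent of q ∈ [1,∞]. -/
noncomputable def dualExp (q : ℝ≥0∞) : ℝ≥0∞ :=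
  if q = 1 then ∞ else if q = ∞ then 1 else q / (q - 1)

/-- The dual norm of the ℓ_q norm: the ℓ norm with conjugate exponent. -/
noncomputable def lqDualNorm {p : ℕ} (q : ℝ≥0∞) (v : Fin p → ℝ) : ℝ :=
  lqNorm (dualExp q) v

/-- The penalized objective function
`β ↦ g(‖Y − Xβ‖₂²) + Σ_j λ_j ‖M_j β‖_{q_j}`. -/
noncomputable def objFn {n p k : ℕ} (g : ℝ → ℝ) (Y : Fin n → ℝ)
    (X : Matrix (Fin n) (Fin p) ℝ) (M : Fin k → Matrix (Fin p) (Fin p) ℝ)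
    (q : Fin k → ℝ≥0∞) (lam : Fin k → ℝ) (β : Fin p → ℝ) : ℝ :=
  g (sqNorm (Y - X.mulVec β)) + ∑ j, lam j * lqNorm (q j) ((M j).mulVec β)

lemma lqNorm_eq_norm {m : ℕ} {q : ℝ≥0∞} (hq : 1 ≤ q) (v : Fin m → ℝ) :
    lqNorm q v =
      @Norm.norm (PiLp q (fun _ : Fin m => ℝ)) _ ((WithLp.equiv q (Fin m → ℝ)).symm v) := by
  haveI : Fact (1 ≤ q) := ⟨hq⟩
  rcases eq_or_ne q ∞ with h | h
  · subst h
    rw [lqNorm, if_pos rfl, PiLp.norm_eq_ciSup]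
    simp [Real.norm_eq_abs, WithLp.equiv_symm_apply, PiLp.toLp_apply]
  · have hq0 : q ≠ 0 := fun h0 => by simp [h0] at hq
    rw [lqNorm, if_neg h, PiLp.norm_eq_sum (ENNReal.toReal_pos hq0 h)]
    simp [Real.norm_eq_abs, WithLp.equiv_symm_apply, PiLp.toLp_apply]

lemma lqNorm_nonneg {m : ℕ} {q : ℝ≥0∞} (hq : 1 ≤ q) (v : Fin m → ℝ) :
    0 ≤ lqNorm q v := by
  haveI : Fact (1 ≤ q) := ⟨hq⟩
  rw [lqNorm_eq_norm hq]; exact norm_nonneg _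

lemma lqNorm_zero {m : ℕ} {q : ℝ≥0∞} (hq : 1 ≤ q) :
    lqNorm q (0 : Fin m → ℝ) = 0 := by
  haveI : Fact (1 ≤ q) := ⟨hq⟩
  rw [lqNorm_eq_norm hq, WithLp.equiv_symm_apply, WithLp.toLp_zero, norm_zero]

lemma lqNorm_eq_zero {m : ℕ} {q : ℝ≥0∞} (hq : 1 ≤ q) {v : Fin m → ℝ}
    (h : lqNorm q v = 0) : v = 0 := by
  haveI : Fact (1 ≤ q) := ⟨hq⟩
  rw [lqNorm_eq_norm hq, norm_eq_zero] at h
  exact (WithLp.equiv q (Fin m → ℝ)).symm.injective (h.trans (WithLp.toLp_zero (p := q) (V := Fin m → ℝ)).symm)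

lemma lqNorm_smul {m : ℕ} {q : ℝ≥0∞} (hq : 1 ≤ q) (c : ℝ) (v : Fin m → ℝ) :
    lqNorm q (c • v) = |c| * lqNorm q v := by
  haveI : Fact (1 ≤ q) := ⟨hq⟩
  rw [lqNorm_eq_norm hq, lqNorm_eq_norm hq, WithLp.equiv_symm_apply, WithLp.toLp_smul, norm_smul,
    Real.norm_eq_abs]

lemma lqNorm_add_le {m : ℕ} {q : ℝ≥0∞} (hq : 1 ≤ q) (u v : Fin m → ℝ) :
    lqNorm q (u + v) ≤ lqNorm q u + lqNorm q v := by
  haveI : Fact (1 ≤ q) := ⟨hq⟩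
  rw [lqNorm_eq_norm hq, lqNorm_eq_norm hq, lqNorm_eq_norm hq, WithLp.equiv_symm_apply, WithLp.toLp_add]
  exact norm_add_le _ _

lemma lqNorm_continuous {m : ℕ} {q : ℝ≥0∞} (hq : 1 ≤ q) :
    Continuous (fun v : Fin m → ℝ => lqNorm q v) := by
  haveI : Fact (1 ≤ q) := ⟨hq⟩
  have : Continuous fun v : Fin m → ℝ =>
      @Norm.norm (PiLp q (fun _ : Fin m => ℝ)) _ ((WithLp.equiv q (Fin m → ℝ)).symm v) :=
    continuous_norm.comp (PiLp.continuous_toLp q (fun _ : Fin m => ℝ))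
  exact this.congr fun v => (lqNorm_eq_norm hq v).symm

lemma sqNorm_nonneg {n : ℕ} (v : Fin n → ℝ) : 0 ≤ sqNorm v :=
  Finset.sum_nonneg fun i _ => sq_nonneg _

lemma continuous_sqNorm {n : ℕ} : Continuous (fun v : Fin n → ℝ => sqNorm v) :=
  continuous_finset_sum _ fun i _ => (continuous_apply i).pow 2

lemma mulVec_continuous {a b : ℕ} (A : Matrix (Fin a) (Fin b) ℝ) :
    Continuous fun v : Fin b → ℝ => A.mulVec v := by
  have := LinearMap.continuous_of_finiteDimensional A.mulVecLin
  exact this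

/-- Coercivity of the total penalty under the kernel-intersection condition. -/
lemma penalty_coercive {p k : ℕ} (M : Fin k → Matrix (Fin p) (Fin p) ℝ)
    (hker : ∀ v : Fin p → ℝ, (∀ j, (M j).mulVec v = 0) → v = 0)
    (q : Fin k → ℝ≥0∞) (hq : ∀ j, 1 ≤ q j) :
    ∃ c > 0, ∀ β : Fin p → ℝ, c * ‖β‖ ≤ ∑ j, lqNorm (q j) ((M j).mulVec β) := by
  set Φ : (Fin p → ℝ) → ℝ := fun β => ∑ j, lqNorm (q j) ((M j).mulVec β) with hΦdef
  have hΦ0 : ∀ β, 0 ≤ Φ β := fun β =>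
    Finset.sum_nonneg fun j _ => lqNorm_nonneg (hq j) _
  have hΦzero : ∀ β, Φ β = 0 → β = 0 := by
    intro β h
    apply hker
    intro j
    have hall := (Finset.sum_eq_zero_iff_of_nonneg
      (fun j _ => lqNorm_nonneg (hq j) ((M j).mulVec β))).1 h j (Finset.mem_univ j)
    exact lqNorm_eq_zero (hq j) hall
  have hΦc : Continuous Φ :=
    continuous_finset_sum _ fun j _ => (lqNorm_continuous (hq j)).comp (mulVec_continuous (M j))
  have hΦhom : ∀ (t : ℝ) (β : Fin p → ℝ), Φ (t • β) = |t| * Φ β := by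
    intro t β
    simp only [hΦdef, Matrix.mulVec_smul, lqNorm_smul (hq _), Finset.mul_sum]
  rcases Nat.eq_zero_or_pos p with hp | hp
  · refine ⟨1, one_pos, fun β => ?_⟩
    subst hp
    have hβ : β = 0 := funext fun i => absurd i.2 (by omega)
    subst hβ
    rw [norm_zero, mul_zero]
    exact hΦ0 0
  · haveI : Nonempty (Fin p) := Fin.pos_iff_nonempty.1 hp
    have hne : (Metric.sphere (0 : Fin p → ℝ) 1).Nonempty :=
      NormedSpace.sphere_nonempty.2 zero_le_one
    obtain ⟨x₀, hx₀, hmin'⟩ :=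
      (isCompact_sphere (0 : Fin p → ℝ) 1).exists_isMinOn hne hΦc.continuousOn
    have hmin : ∀ y ∈ Metric.sphere (0 : Fin p → ℝ) 1, Φ x₀ ≤ Φ y := fun y hy => hmin' hy
    have hx₀n : ‖x₀‖ = 1 := by simpa using hx₀
    have hc : 0 < Φ x₀ := by
      rcases lt_or_eq_of_le (hΦ0 x₀) with h | h
      · exact h
      · exfalso
        have : x₀ = 0 := hΦzero x₀ h.symm
        rw [this] at hx₀n
        simp at hx₀n
    refine ⟨Φ x₀, hc, fun β => ?_⟩
    rcases eq_or_ne β 0 with rfl | hβ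
    · rw [norm_zero, mul_zero]
      exact hΦ0 0
    · have hnβ : (0 : ℝ) < ‖β‖ := norm_pos_iff.2 hβ
      set u : Fin p → ℝ := ‖β‖⁻¹ • β with hu
      have hus : u ∈ Metric.sphere (0 : Fin p → ℝ) 1 := by
        simp [hu, norm_smul, abs_of_pos (inv_pos.2 hnβ), inv_mul_cancel₀ hnβ.ne']
      have h1 : Φ x₀ ≤ Φ u := hmin u hus
      have h2 : Φ β = ‖β‖ * Φ u := by
        have : β = ‖β‖ • u := by rw [hu, smul_inv_smul₀ hnβ.ne']
        rw [this, hΦhom, abs_of_pos hnβ, hu, smul_inv_smul₀ hnβ.ne']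
      show Φ x₀ * ‖β‖ ≤ Φ β
      rw [h2]
      nlinarith [h1, hnβ.le]

/-- Among minimizers of the penalized objective, the fitted value `Xβ` is unique. -/
lemma fitted_unique {n p k : ℕ} (g : ℝ → ℝ) (Y : Fin n → ℝ)
    (X : Matrix (Fin n) (Fin p) ℝ) (M : Fin k → Matrix (Fin p) (Fin p) ℝ)
    (q : Fin k → ℝ≥0∞) (hq : ∀ j, 1 ≤ q j)
    (hgconv : StrictConvexOn ℝ (Set.univ : Set (Fin n → ℝ)) (fun a => g (sqNorm a)))
    (lam : Fin k → ℝ) (hlam : ∀ j, 0 < lam j)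
    (β₁ β₂ : Fin p → ℝ)
    (h1 : ∀ β, objFn g Y X M q lam β₁ ≤ objFn g Y X M q lam β)
    (h2 : ∀ β, objFn g Y X M q lam β₂ ≤ objFn g Y X M q lam β) :
    X.mulVec β₁ = X.mulVec β₂ := by
  by_contra hne
  have heq : objFn g Y X M q lam β₁ = objFn g Y X M q lam β₂ :=
    le_antisymm (h1 β₂) (h2 β₁)
  set βm : Fin p → ℝ := (1/2 : ℝ) • β₁ + (1/2 : ℝ) • β₂ with hβm
  have hres : Y - X.mulVec βm =
      (1/2 : ℝ) • (Y - X.mulVec β₁) + (1/2 : ℝ) • (Y - X.mulVec β₂) := by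
    rw [hβm, Matrix.mulVec_add, Matrix.mulVec_smul, Matrix.mulVec_smul]
    ext i
    simp only [Pi.add_apply, Pi.sub_apply, Pi.smul_apply, smul_eq_mul]
    ring
  have hrne : Y - X.mulVec β₁ ≠ Y - X.mulVec β₂ := fun h => hne (sub_right_injective h)
  have hgs : g (sqNorm (Y - X.mulVec βm)) <
      (1/2 : ℝ) * g (sqNorm (Y - X.mulVec β₁)) + (1/2 : ℝ) * g (sqNorm (Y - X.mulVec β₂)) := by
    have := hgconv.2 (Set.mem_univ (Y - X.mulVec β₁)) (Set.mem_univ (Y - X.mulVec β₂)) hrne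
      (by norm_num : (0:ℝ) < 1/2) (by norm_num : (0:ℝ) < 1/2) (by norm_num)
    rw [hres]
    simpa [smul_eq_mul] using this
  have hpen : ∀ j, lqNorm (q j) ((M j).mulVec βm) ≤
      (1/2 : ℝ) * lqNorm (q j) ((M j).mulVec β₁) + (1/2 : ℝ) * lqNorm (q j) ((M j).mulVec β₂) := by
    intro j
    have hmm : (M j).mulVec βm =
        (1/2 : ℝ) • ((M j).mulVec β₁) + (1/2 : ℝ) • ((M j).mulVec β₂) := by
      rw [hβm, Matrix.mulVec_add, Matrix.mulVec_smul, Matrix.mulVec_smul]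
    rw [hmm]
    calc lqNorm (q j) ((1/2 : ℝ) • ((M j).mulVec β₁) + (1/2 : ℝ) • ((M j).mulVec β₂))
        ≤ lqNorm (q j) ((1/2 : ℝ) • ((M j).mulVec β₁)) +
          lqNorm (q j) ((1/2 : ℝ) • ((M j).mulVec β₂)) := lqNorm_add_le (hq j) _ _
      _ = (1/2 : ℝ) * lqNorm (q j) ((M j).mulVec β₁) +
          (1/2 : ℝ) * lqNorm (q j) ((M j).mulVec β₂) := by
          rw [lqNorm_smul (hq j), lqNorm_smul (hq j),
            abs_of_pos (by norm_num : (0:ℝ) < 1/2)]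
  have hlt : objFn g Y X M q lam βm <
      (1/2 : ℝ) * objFn g Y X M q lam β₁ + (1/2 : ℝ) * objFn g Y X M q lam β₂ := by
    unfold objFn
    have hsum : ∑ j, lam j * lqNorm (q j) ((M j).mulVec βm) ≤
        (1/2 : ℝ) * ∑ j, lam j * lqNorm (q j) ((M j).mulVec β₁) +
        (1/2 : ℝ) * ∑ j, lam j * lqNorm (q j) ((M j).mulVec β₂) := by
      rw [Finset.mul_sum, Finset.mul_sum, ← Finset.sum_add_distrib]
      apply Finset.sum_le_sum
      intro j _
      have := mul_le_mul_of_nonneg_left (hpen j) (hlam j).le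
      nlinarith [this]
    nlinarith [hgs, hsum]
  have : objFn g Y X M q lam βm < objFn g Y X M q lam β₁ := by
    rw [heq] at hlt ⊢
    linarith
  exact absurd (h1 βm) (not_le.2 this)


lemma objFn_tendsto {n p k : ℕ} (g : ℝ → ℝ) (Y : Fin n → ℝ)
    (X : Matrix (Fin n) (Fin p) ℝ) (M : Fin k → Matrix (Fin p) (Fin p) ℝ)
    (q : Fin k → ℝ≥0∞) (hq : ∀ j, 1 ≤ q j)
    (hgsq : Continuous fun a : Fin n → ℝ => g (sqNorm a))
    {u : ℕ → Fin k → ℝ} {v : ℕ → Fin p → ℝ} {lam0 : Fin k → ℝ} {β0 : Fin p → ℝ}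
    (hu : Filter.Tendsto u Filter.atTop (nhds lam0))
    (hv : Filter.Tendsto v Filter.atTop (nhds β0)) :
    Filter.Tendsto (fun m => objFn g Y X M q (u m) (v m)) Filter.atTop
      (nhds (objFn g Y X M q lam0 β0)) := by
  unfold objFn
  apply Filter.Tendsto.add
  · have hres : Filter.Tendsto (fun m => Y - X.mulVec (v m)) Filter.atTop
        (nhds (Y - X.mulVec β0)) :=
      tendsto_const_nhds.sub (((mulVec_continuous X).tendsto β0).comp hv)
    exact (hgsq.tendsto _).comp hres
  · apply tendsto_finset_sum
    intro j _
    exact (((continuous_apply j).tendsto lam0).comp hu).mul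
      (((lqNorm_continuous (hq j)).tendsto _).comp
        (((mulVec_continuous (M j)).tendsto β0).comp hv))

set_option maxHeartbeats 2000000 in
/-- Lemma (continuity): for any selection of minimizers `λ ↦ β̂(λ)`, the maps
`λ ↦ g(‖Y − Xβ̂(λ)‖₂²)` and `λ ↦ ‖Y − Xβ̂(λ)‖₂²` are continuous on `(0,∞)^k`. -/
theorem continuity_of_fitted_values
    {n p k : ℕ}
    (Y ε : Fin n → ℝ) (X : Matrix (Fin n) (Fin p) ℝ) (βstar : Fin p → ℝ)
    (hmodel : Y = X.mulVec βstar + ε)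
    (g : ℝ → ℝ) (hg0 : g 0 = 0)
    (hgcont : ContinuousOn g (Set.Ici 0))
    (hgmono : StrictMonoOn g (Set.Ici 0))
    (hgconv : StrictConvexOn ℝ (Set.univ : Set (Fin n → ℝ)) (fun a => g (sqNorm a)))
    (M : Fin k → Matrix (Fin p) (Fin p) ℝ)
    (hker : ∀ v : Fin p → ℝ, (∀ j, (M j).mulVec v = 0) → v = 0)
    (q : Fin k → ℝ≥0∞) (hq : ∀ j, 1 ≤ q j)
    (sel : (Fin k → ℝ) → (Fin p → ℝ))
    (hsel : ∀ lam : Fin k → ℝ, (∀ j, 0 < lam j) →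
      ∀ β : Fin p → ℝ, objFn g Y X M q lam (sel lam) ≤ objFn g Y X M q lam β) :
    ContinuousOn (fun lam => g (sqNorm (Y - X.mulVec (sel lam))))
        {lam : Fin k → ℝ | ∀ j, 0 < lam j} ∧
      ContinuousOn (fun lam => sqNorm (Y - X.mulVec (sel lam)))
        {lam : Fin k → ℝ | ∀ j, 0 < lam j} := by
  obtain ⟨c, hc, hcoer⟩ := penalty_coercive M hker q hq
  have hmv : Continuous fun β : Fin p → ℝ => X.mulVec β := mulVec_continuous X
  have hgsq : Continuous fun a : Fin n → ℝ => g (sqNorm a) :=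
    hgcont.comp_continuous continuous_sqNorm fun a => sqNorm_nonneg a
  have hobjc : Continuous fun z : (Fin k → ℝ) × (Fin p → ℝ) => objFn g Y X M q z.1 z.2 := by
    unfold objFn
    refine Continuous.add ?_ ?_
    · exact hgsq.comp (continuous_const.sub (hmv.comp continuous_snd))
    · refine continuous_finset_sum _ fun j _ => Continuous.mul ?_ ?_
      · exact (continuous_apply j).comp continuous_fst
      · exact (lqNorm_continuous (hq j)).comp ((mulVec_continuous (M j)).comp continuous_snd)
  have hgx_nonneg : ∀ x : Fin n → ℝ, 0 ≤ g (sqNorm x) := by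
    intro x
    rw [← hg0]
    exact hgmono.monotoneOn Set.self_mem_Ici (Set.mem_Ici.2 (sqNorm_nonneg x)) (sqNorm_nonneg x)
  set C : ℝ := g (sqNorm Y) with hCdef
  have key : ContinuousOn (fun lam => Y - X.mulVec (sel lam))
      {lam : Fin k → ℝ | ∀ j, 0 < lam j} := by
    intro lam0 hlam0
    have hlam0' : ∀ j, 0 < lam0 j := hlam0
    apply Filter.tendsto_of_subseq_tendsto
    intro ns hns
    rw [tendsto_nhdsWithin_iff] at hns
    obtain ⟨hns1, hns2⟩ := hns
    have hev : ∀ᶠ m' in Filter.atTop,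
        (∀ j, lam0 j / 2 < ns m' j) ∧ (∀ j, 0 < ns m' j) := by
      refine Filter.Eventually.and ?_ hns2
      rw [Filter.eventually_all]
      intro j
      exact (((continuous_apply j).tendsto lam0).comp hns1).eventually
        (eventually_gt_nhds (by linarith [hlam0' j]))
    obtain ⟨N, hN⟩ := Filter.eventually_atTop.1 hev
    set R : ℝ := (∑ j, 2 * C / lam0 j) / c with hRdef
    have hbound : ∀ m', N ≤ m' → ‖sel (ns m')‖ ≤ R := by
      intro m' hm'
      obtain ⟨hhalf, hmem⟩ := hN m' hm'
      have hmin := hsel (ns m') hmem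
      have h0 : objFn g Y X M q (ns m') 0 = C := by
        rw [objFn, Matrix.mulVec_zero, sub_zero]
        rw [Finset.sum_eq_zero, add_zero]
        intro j _
        rw [Matrix.mulVec_zero, lqNorm_zero (hq j), mul_zero]
      have hub : objFn g Y X M q (ns m') (sel (ns m')) ≤ C := h0 ▸ hmin 0
      have hsum_le : ∑ j, ns m' j * lqNorm (q j) ((M j).mulVec (sel (ns m'))) ≤ C := by
        have hfit : 0 ≤ g (sqNorm (Y - X.mulVec (sel (ns m')))) := hgx_nonneg _
        rw [objFn] at hub
        linarith
      have hterm : ∀ j, lqNorm (q j) ((M j).mulVec (sel (ns m'))) ≤ 2 * C / lam0 j := by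
        intro j
        have hpos := hhalf j
        have h2 : ns m' j * lqNorm (q j) ((M j).mulVec (sel (ns m'))) ≤ C :=
          (Finset.single_le_sum
            (f := fun i => ns m' i * lqNorm (q i) ((M i).mulVec (sel (ns m'))))
            (fun i _ => mul_nonneg (hmem i).le (lqNorm_nonneg (hq i) _))
            (Finset.mem_univ j)).trans hsum_le
        have hlq := lqNorm_nonneg (hq j) ((M j).mulVec (sel (ns m')))
        rw [le_div_iff₀ (hlam0' j)]
        nlinarith [mul_le_mul_of_nonneg_right hpos.le hlq]
      have hΦ : ∑ j, lqNorm (q j) ((M j).mulVec (sel (ns m'))) ≤ ∑ j, 2 * C / lam0 j :=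
        Finset.sum_le_sum fun j _ => hterm j
      have hcb := hcoer (sel (ns m'))
      rw [hRdef, le_div_iff₀ hc]
      nlinarith [hcb, hΦ]
    have hball : ∀ m', sel (ns (N + m')) ∈ Metric.closedBall (0 : Fin p → ℝ) R := by
      intro m'
      rw [Metric.mem_closedBall, dist_zero_right]
      exact hbound _ (Nat.le_add_right N m')
    obtain ⟨β₀, _, φ, hφ, hβlim⟩ :=
      tendsto_subseq_of_bounded Metric.isBounded_closedBall hball
    refine ⟨fun m' => N + φ m', ?_⟩
    have hms : Filter.Tendsto (fun m' => N + φ m') Filter.atTop Filter.atTop :=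
      Filter.tendsto_atTop_mono (fun m' => hφ.le_apply.trans (Nat.le_add_left _ _))
        Filter.tendsto_id
    have hβlim' : Filter.Tendsto (fun m' => sel (ns (N + φ m'))) Filter.atTop (nhds β₀) := hβlim
    have hlamlim : Filter.Tendsto (fun m' => ns (N + φ m')) Filter.atTop (nhds lam0) :=
      hns1.comp hms
    have hmemS : ∀ m', ∀ j, 0 < ns (N + φ m') j := fun m' =>
      (hN _ (Nat.le_add_right N (φ m'))).2
    have hβ₀min : ∀ β, objFn g Y X M q lam0 β₀ ≤ objFn g Y X M q lam0 β := by
      intro β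
      have hL := objFn_tendsto g Y X M q hq hgsq hlamlim hβlim'
      have hRt := objFn_tendsto g Y X M q hq hgsq hlamlim
        (tendsto_const_nhds : Filter.Tendsto (fun _ : ℕ => β) Filter.atTop (nhds β))
      exact le_of_tendsto_of_tendsto' hL hRt fun m' => hsel _ (hmemS m') β
    have hfeq : X.mulVec β₀ = X.mulVec (sel lam0) :=
      fitted_unique g Y X M q hq hgconv lam0 hlam0' β₀ (sel lam0) hβ₀min (hsel lam0 hlam0')
    have hfin : Filter.Tendsto (fun m' => Y - X.mulVec (sel (ns (N + φ m'))))
        Filter.atTop (nhds (Y - X.mulVec (sel lam0))) := by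
      rw [← hfeq]
      exact tendsto_const_nhds.sub ((hmv.tendsto β₀).comp hβlim')
    exact hfin
  exact ⟨hgsq.comp_continuousOn key, continuous_sqNorm.comp_continuousOn key⟩
end

section
/- Let β̄ ∈ argmin_{β∈ℝᵖ} { ‖Y − Xβ‖₂² + λ̄‖β‖₁ } be the lasso estimator with tuning parameter λ̄ = 2‖Xᵀε‖_∞. Then (1/n)‖X(β* − β̄)‖₂² ≤ inf_{β∈ℝᵖ} { (1/n)‖X(β* − β)‖₂² + (4/n)‖Xᵀε‖_∞‖β‖₁ }. -/
open Matrix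
open scoped BigOperators Classical

/-- Euclidean norm of a vector. -/
noncomputable def l2Norm {n : ℕ} (v : Fin n → ℝ) : ℝ := Real.sqrt (∑ i, (v i) ^ 2)

/-- ℓ₁ norm of a vector. -/
noncomputable def l1Norm {p : ℕ} (v : Fin p → ℝ) : ℝ := ∑ i, |v i|

/-- ℓ_∞ (supremum) norm of a vector. -/
noncomputable def linfNorm {p : ℕ} (v : Fin p → ℝ) : ℝ := ⨆ i, |v i|

lemma sqNorm_add {n : ℕ} (a b : Fin n → ℝ) :
    sqNorm (a + b) = sqNorm a + 2 * (∑ i, a i * b i) + sqNorm b := by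
  simp only [sqNorm, Pi.add_apply, add_sq, Finset.sum_add_distrib, Finset.mul_sum]
  ring

lemma dot_mulVec {n p : ℕ} (X : Matrix (Fin n) (Fin p) ℝ) (v : Fin p → ℝ) (w : Fin n → ℝ) :
    ∑ i, X.mulVec v i * w i = ∑ j, v j * Xᵀ.mulVec w j := by
  simp only [Matrix.mulVec, dotProduct, Matrix.transpose_apply,
    Finset.sum_mul, Finset.mul_sum]
  rw [Finset.sum_comm]
  apply Finset.sum_congr rfl
  intro j _
  apply Finset.sum_congr rfl
  intro i _
  ring

lemma abs_dot_le {p : ℕ} (v w : Fin p → ℝ) :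
    |∑ j, v j * w j| ≤ l1Norm v * linfNorm w := by
  have hM : ∀ j, |w j| ≤ linfNorm w := by
    intro j
    unfold linfNorm
    exact le_ciSup (Set.Finite.bddAbove (Set.finite_range fun i => |w i|)) j
  calc |∑ j, v j * w j| ≤ ∑ j, |v j * w j| := Finset.abs_sum_le_sum_abs _ _
    _ = ∑ j, |v j| * |w j| := by simp [abs_mul]
    _ ≤ ∑ j, |v j| * linfNorm w := by
        apply Finset.sum_le_sum
        intro j _
        exact mul_le_mul_of_nonneg_left (hM j) (abs_nonneg _)
    _ = l1Norm v * linfNorm w := by rw [l1Norm, Finset.sum_mul]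

lemma l1_sub_le {p : ℕ} (a b : Fin p → ℝ) : l1Norm (a - b) ≤ l1Norm a + l1Norm b := by
  simp only [l1Norm, Pi.sub_apply, ← Finset.sum_add_distrib]
  exact Finset.sum_le_sum fun j _ => abs_sub _ _

/-- Penalty (slow rate) oracle inequality for the lasso with tuning parameter
`λ̄ = 2‖Xᵀε‖_∞`. -/
theorem lasso_oracle_inequality
    {n p : ℕ} (hn : 0 < n)
    (Y ε : Fin n → ℝ) (X : Matrix (Fin n) (Fin p) ℝ) (βstar : Fin p → ℝ)
    (hmodel : Y = X.mulVec βstar + ε)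
    (lamBar : ℝ) (hlam : lamBar = 2 * linfNorm (Xᵀ.mulVec ε))
    (βbar : Fin p → ℝ)
    (hβbar : ∀ β : Fin p → ℝ,
      sqNorm (Y - X.mulVec βbar) + lamBar * l1Norm βbar
        ≤ sqNorm (Y - X.mulVec β) + lamBar * l1Norm β) :
    (1 / n) * sqNorm (X.mulVec (βstar - βbar))
      ≤ ⨅ β : Fin p → ℝ,
          ((1 / n) * sqNorm (X.mulVec (βstar - β))
            + (4 / n) * linfNorm (Xᵀ.mulVec ε) * l1Norm β) := by
  set L : ℝ := linfNorm (Xᵀ.mulVec ε) with hL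
  have hL0 : 0 ≤ L := Real.iSup_nonneg fun i => abs_nonneg _
  apply le_ciInf
  intro β
  -- key inequality without the 1/n
  have hres : ∀ γ : Fin p → ℝ,
      Y - X.mulVec γ = X.mulVec (βstar - γ) + ε := by
    intro γ
    rw [hmodel, Matrix.mulVec_sub]
    abel
  have key : sqNorm (X.mulVec (βstar - βbar))
      ≤ sqNorm (X.mulVec (βstar - β)) + 4 * L * l1Norm β := by
    have h := hβbar β
    rw [hres βbar, hres β, sqNorm_add, sqNorm_add] at h
    rw [dot_mulVec, dot_mulVec] at h
    -- h : sq(X d̄) + 2 dot(β*-β̄, u) + sq ε + λ l1 β̄ ≤ sq(X d) + 2 dot(β*-β,u) + sq ε + λ l1 β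
    have hdiff : (∑ j, (βstar - β) j * Xᵀ.mulVec ε j)
        - (∑ j, (βstar - βbar) j * Xᵀ.mulVec ε j)
        = ∑ j, (βbar - β) j * Xᵀ.mulVec ε j := by
      rw [← Finset.sum_sub_distrib]
      apply Finset.sum_congr rfl
      intro j _
      simp only [Pi.sub_apply]
      ring
    have hbd : |∑ j, (βbar - β) j * Xᵀ.mulVec ε j| ≤ (l1Norm βbar + l1Norm β) * L := by
      calc |∑ j, (βbar - β) j * Xᵀ.mulVec ε j| ≤ l1Norm (βbar - β) * L := abs_dot_le _ _
        _ ≤ (l1Norm βbar + l1Norm β) * L :=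
            mul_le_mul_of_nonneg_right (l1_sub_le _ _) hL0
    rw [abs_le] at hbd
    rw [hlam] at h
    nlinarith [hbd.1, hbd.2, hdiff]
  have hn' : (0:ℝ) ≤ 1 / n := by positivity
  have := mul_le_mul_of_nonneg_left key hn'
  calc (1 / n) * sqNorm (X.mulVec (βstar - βbar))
      ≤ (1 / n) * (sqNorm (X.mulVec (βstar - β)) + 4 * L * l1Norm β) := this
    _ = (1 / n) * sqNorm (X.mulVec (βstar - β)) + (4 / n) * L * l1Norm β := by ring
end

section
/- Let G₁,…,G_k be a partition of {1,…,p}, and for β ∈ ℝᵖ let β_{Gⱼ} ∈ ℝᵖ be defined by (β_{Gⱼ})_i = β_i·1{i ∈ Gⱼ}. Let β̄ ∈ argmin_{β∈ℝᵖ} { ‖Y − Xβ‖₂² + λ̄ Σ_{j=1}^k ‖β_{Gⱼ}‖₂ } be the group lasso estimator with tuning parameter λ̄ = 2 max_{l∈{1,…,k}} ‖(Xᵀε)_{G_l}‖₂. Then (1/n)‖X(β* − β̄)‖₂² ≤ (2/n) max_{l∈{1,…,k}} ‖(Xᵀε)_{G_l}‖₂ · Σ_{j=1}^k ‖β*_{Gⱼ}‖₂.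 -/
open Matrix
open scoped BigOperators Classical

private lemma l2Norm_eq_norm {n : ℕ} (v : Fin n → ℝ) :
    l2Norm v = ‖(WithLp.equiv 2 (Fin n → ℝ)).symm v‖ := by
  rw [EuclideanSpace.norm_eq]
  simp [l2Norm, Real.norm_eq_abs, sq_abs]

private lemma l2Norm_nonneg {n : ℕ} (v : Fin n → ℝ) : 0 ≤ l2Norm v := Real.sqrt_nonneg _

private lemma inner_le_l2 {n : ℕ} (u v : Fin n → ℝ) :
    ∑ i, u i * v i ≤ l2Norm u * l2Norm v := by
  rw [l2Norm_eq_norm, l2Norm_eq_norm]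
  have h := real_inner_le_norm ((WithLp.equiv 2 (Fin n → ℝ)).symm u)
      ((WithLp.equiv 2 (Fin n → ℝ)).symm v)
  simpa [PiLp.inner_apply, RCLike.inner_apply, starRingEnd_apply, mul_comm] using h

private lemma l2_convex {n : ℕ} (t : ℝ) (h0 : 0 ≤ t) (h1 : t ≤ 1) (u v : Fin n → ℝ) :
    l2Norm ((1 - t) • u + t • v) ≤ (1 - t) * l2Norm u + t * l2Norm v := by
  rw [l2Norm_eq_norm, l2Norm_eq_norm, l2Norm_eq_norm]
  calc ‖(WithLp.equiv 2 (Fin n → ℝ)).symm ((1 - t) • u + t • v)‖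
      = ‖(1 - t) • (WithLp.equiv 2 (Fin n → ℝ)).symm u
          + t • (WithLp.equiv 2 (Fin n → ℝ)).symm v‖ := rfl
    _ ≤ ‖(1 - t) • (WithLp.equiv 2 (Fin n → ℝ)).symm u‖
          + ‖t • (WithLp.equiv 2 (Fin n → ℝ)).symm v‖ := norm_add_le _ _
    _ = (1 - t) * ‖(WithLp.equiv 2 (Fin n → ℝ)).symm u‖
          + t * ‖(WithLp.equiv 2 (Fin n → ℝ)).symm v‖ := by
        rw [norm_smul, norm_smul, Real.norm_eq_abs, Real.norm_eq_abs,
          abs_of_nonneg (by linarith), abs_of_nonneg h0]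

private lemma l2_sub_le {n : ℕ} (u v : Fin n → ℝ) :
    l2Norm (u - v) ≤ l2Norm u + l2Norm v := by
  rw [l2Norm_eq_norm, l2Norm_eq_norm, l2Norm_eq_norm]
  exact norm_sub_le _ _

private lemma partition_sum {p k : ℕ} (G : Fin k → Finset (Fin p))
    (hdisj : ∀ j l, j ≠ l → Disjoint (G j) (G l))
    (hcover : ∀ i : Fin p, ∃ j, i ∈ G j) (f : Fin p → ℝ) :
    ∑ j, ∑ i ∈ G j, f i = ∑ i, f i := by
  classical
  choose g hg using hcover
  have hGj : ∀ j, G j = Finset.univ.filter (fun i => g i = j) := by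
    intro j
    ext i
    simp only [Finset.mem_filter, Finset.mem_univ, true_and]
    constructor
    · intro hi
      by_contra hne
      exact (Finset.disjoint_left.mp (hdisj (g i) j hne) (hg i)) hi
    · intro h
      rw [← h]; exact hg i
  calc ∑ j, ∑ i ∈ G j, f i
      = ∑ j, ∑ i ∈ Finset.univ.filter (fun i => g i = j), f i := by
        exact Finset.sum_congr rfl fun j _ => by rw [hGj j]
    _ = ∑ i, f i := Finset.sum_fiberwise _ _ _

/-- Penalty bound for the group lasso with non-overlapping groups, with tuning
parameter `λ̄ = 2 max_l ‖(Xᵀε)_{G_l}‖₂`. -/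
theorem group_lasso_bound
    {n p k : ℕ} (hn : 0 < n) (hk : 0 < k)
    (Y ε : Fin n → ℝ) (X : Matrix (Fin n) (Fin p) ℝ) (βstar : Fin p → ℝ)
    (hmodel : Y = X.mulVec βstar + ε)
    (G : Fin k → Finset (Fin p))
    (hdisj : ∀ j l, j ≠ l → Disjoint (G j) (G l))
    (hcover : ∀ i : Fin p, ∃ j, i ∈ G j)
    (lamBar : ℝ)
    (hlam : lamBar = 2 * ⨆ l : Fin k, l2Norm (fun i => if i ∈ G l then Xᵀ.mulVec ε i else 0))
    (βbar : Fin p → ℝ)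
    (hβbar : ∀ β : Fin p → ℝ,
      sqNorm (Y - X.mulVec βbar)
          + lamBar * ∑ j, l2Norm (fun i => if i ∈ G j then βbar i else 0)
        ≤ sqNorm (Y - X.mulVec β)
          + lamBar * ∑ j, l2Norm (fun i => if i ∈ G j then β i else 0)) :
    (1 / n) * sqNorm (X.mulVec (βstar - βbar))
      ≤ (2 / n) * (⨆ l : Fin k, l2Norm (fun i => if i ∈ G l then Xᵀ.mulVec ε i else 0))
          * ∑ j, l2Norm (fun i => if i ∈ G j then βstar i else 0) := by
  classical
  set w : Fin p → ℝ := Xᵀ.mulVec ε with hw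
  set M : ℝ := ⨆ l : Fin k, l2Norm (fun i => if i ∈ G l then w i else 0) with hMdef
  set V : Fin n → ℝ := X.mulVec (βstar - βbar) with hV
  set A : ℝ := sqNorm V with hA
  set Ss : ℝ := ∑ j, l2Norm (fun i => if i ∈ G j then βstar i else 0) with hSs
  set Sh : ℝ := ∑ j, l2Norm (fun i => if i ∈ G j then βbar i else 0) with hSh
  have hMge : ∀ l : Fin k, l2Norm (fun i => if i ∈ G l then w i else 0) ≤ M := by
    intro l
    rw [hMdef]
    exact le_ciSup (f := fun l => l2Norm fun i => if i ∈ G l then w i else 0)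
      (Set.Finite.bddAbove (Set.finite_range _)) l
  have hM0 : 0 ≤ M := le_trans (l2Norm_nonneg _) (hMge ⟨0, hk⟩)
  have hA0 : 0 ≤ A := Finset.sum_nonneg fun i _ => sq_nonneg _
  -- group-wise Cauchy–Schwarz
  have hIP : ∀ d : Fin p → ℝ,
      ∑ i, w i * d i ≤ M * ∑ j, l2Norm (fun i => if i ∈ G j then d i else 0) := by
    intro d
    have h1 : ∑ i, w i * d i = ∑ j, ∑ i ∈ G j, w i * d i :=
      (partition_sum G hdisj hcover _).symm
    rw [h1, Finset.mul_sum]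
    apply Finset.sum_le_sum
    intro j _
    have h2 : ∑ i ∈ G j, w i * d i
        = ∑ i, (if i ∈ G j then w i else 0) * (if i ∈ G j then d i else 0) := by
      have h3 : ∀ i : Fin p,
          (if i ∈ G j then w i else 0) * (if i ∈ G j then d i else 0)
            = if i ∈ G j then w i * d i else 0 := by
        intro i; by_cases h : i ∈ G j <;> simp [h]
      rw [Finset.sum_congr rfl fun i _ => h3 i, Finset.sum_ite_mem, Finset.univ_inter]
    rw [h2]
    calc ∑ i, (if i ∈ G j then w i else 0) * (if i ∈ G j then d i else 0)
        ≤ l2Norm (fun i => if i ∈ G j then w i else 0)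
            * l2Norm (fun i => if i ∈ G j then d i else 0) := inner_le_l2 _ _
      _ ≤ M * l2Norm (fun i => if i ∈ G j then d i else 0) :=
          mul_le_mul_of_nonneg_right (hMge j) (l2Norm_nonneg _)
  -- ⟨ε, Xd⟩ = ⟨Xᵀε, d⟩
  have hswap : ∀ d : Fin p → ℝ, ∑ i, ε i * X.mulVec d i = ∑ i, w i * d i := by
    intro d
    simp only [hw, Matrix.mulVec, dotProduct, Matrix.transpose_apply, Finset.mul_sum,
      Finset.sum_mul]
    rw [Finset.sum_comm]
    exact Finset.sum_congr rfl fun i _ => Finset.sum_congr rfl fun i' _ => by ring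
  -- triangle inequality per group
  have hTri : ∀ j, l2Norm (fun i => if i ∈ G j then βbar i - βstar i else 0)
      ≤ l2Norm (fun i => if i ∈ G j then βbar i else 0)
        + l2Norm (fun i => if i ∈ G j then βstar i else 0) := by
    intro j
    have heq : (fun i => if i ∈ G j then βbar i - βstar i else 0)
        = (fun i => if i ∈ G j then βbar i else 0) - (fun i => if i ∈ G j then βstar i else 0) := by
      funext i; by_cases h : i ∈ G j <;> simp [h]
    rw [heq]
    exact l2_sub_le _ _
  have hlam0 : 0 ≤ lamBar := by rw [hlam]; linarith
  -- key inequality for each t ∈ (0,1]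
  have hkey : ∀ t : ℝ, 0 < t → t ≤ 1 → 2 * A ≤ t * A + 4 * M * Ss := by
    intro t ht0 ht1
    have hβ := hβbar (βbar + t • (βstar - βbar))
    set R : Fin n → ℝ := Y - X.mulVec βbar with hRdef
    have hres : Y - X.mulVec (βbar + t • (βstar - βbar)) = R - t • V := by
      rw [hRdef, hV, Matrix.mulVec_add, Matrix.mulVec_smul]
      abel
    have hexp : sqNorm (R - t • V) = sqNorm R - 2 * t * (∑ i, R i * V i) + t ^ 2 * A := by
      have h4 : ∀ i : Fin n, (R i - t * V i) ^ 2
          = R i ^ 2 - 2 * t * (R i * V i) + t ^ 2 * V i ^ 2 := fun i => by ring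
      simp only [sqNorm, Pi.sub_apply, Pi.smul_apply, smul_eq_mul]
      rw [Finset.sum_congr rfl fun i _ => h4 i, Finset.sum_add_distrib,
        Finset.sum_sub_distrib, ← Finset.mul_sum, ← Finset.mul_sum]
      rfl
    have hRV : ∑ i, R i * V i = A + ∑ i, ε i * V i := by
      have hReq : R = V + ε := by
        rw [hRdef, hV, hmodel, Matrix.mulVec_sub]; abel
      rw [hReq]
      simp only [Pi.add_apply, add_mul]
      rw [Finset.sum_add_distrib]
      congr 1
      simp [hA, sqNorm, sq]
    -- penalty convexity
    have hpen : ∑ j, l2Norm (fun i => if i ∈ G j then (βbar + t • (βstar - βbar)) i else 0)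
        ≤ (1 - t) * Sh + t * Ss := by
      have hj : ∀ j, l2Norm (fun i => if i ∈ G j then (βbar + t • (βstar - βbar)) i else 0)
          ≤ (1 - t) * l2Norm (fun i => if i ∈ G j then βbar i else 0)
            + t * l2Norm (fun i => if i ∈ G j then βstar i else 0) := by
        intro j
        have heq : (fun i => if i ∈ G j then (βbar + t • (βstar - βbar)) i else 0)
            = (1 - t) • (fun i => if i ∈ G j then βbar i else 0)
              + t • (fun i => if i ∈ G j then βstar i else 0) := by
          funext i
          by_cases h : i ∈ G j <;> simp [h] <;> ring
        rw [heq]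
        exact l2_convex t (le_of_lt ht0) ht1 _ _
      calc ∑ j, l2Norm (fun i => if i ∈ G j then (βbar + t • (βstar - βbar)) i else 0)
          ≤ ∑ j, ((1 - t) * l2Norm (fun i => if i ∈ G j then βbar i else 0)
              + t * l2Norm (fun i => if i ∈ G j then βstar i else 0)) :=
            Finset.sum_le_sum fun j _ => hj j
        _ = (1 - t) * Sh + t * Ss := by
            rw [Finset.sum_add_distrib, ← Finset.mul_sum, ← Finset.mul_sum, hSh, hSs]
    -- cross term bound
    have hcross : -(∑ i, ε i * V i) ≤ M * (Sh + Ss) := by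
      have h5 : ∑ i, ε i * V i = ∑ i, w i * (βstar i - βbar i) := by
        rw [hV]
        have := hswap (βstar - βbar)
        simpa using this
      have h6 : -(∑ i, ε i * V i) = ∑ i, w i * (βbar i - βstar i) := by
        rw [h5, ← Finset.sum_neg_distrib]
        exact Finset.sum_congr rfl fun i _ => by ring
      rw [h6]
      calc ∑ i, w i * (βbar i - βstar i)
          ≤ M * ∑ j, l2Norm (fun i => if i ∈ G j then βbar i - βstar i else 0) := hIP _
        _ ≤ M * (Sh + Ss) := by
            apply mul_le_mul_of_nonneg_left _ hM0
            rw [hSh, hSs, ← Finset.sum_add_distrib]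
            exact Finset.sum_le_sum fun j _ => hTri j
    -- combine
    rw [hres, hexp, hRV] at hβ
    have hpen' : lamBar * (∑ j, l2Norm (fun i => if i ∈ G j then (βbar + t • (βstar - βbar)) i else 0))
        ≤ lamBar * ((1 - t) * Sh + t * Ss) := mul_le_mul_of_nonneg_left hpen hlam0
    rw [hlam] at hβ hpen'
    have h7 : t * (2 * A) ≤ t * (t * A + 4 * M * Ss) := by nlinarith [hβ, hpen', hcross]
    exact le_of_mul_le_mul_left h7 ht0
  -- take t → 0
  have h2 : 2 * A ≤ 4 * M * Ss := by
    apply le_of_forall_pos_le_add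
    intro δ hδ
    have hA1 : (0 : ℝ) < A + 1 := by linarith
    have ht0 : 0 < min 1 (δ / (A + 1)) := lt_min one_pos (div_pos hδ hA1)
    have := hkey (min 1 (δ / (A + 1))) ht0 (min_le_left _ _)
    have ht2 : min 1 (δ / (A + 1)) ≤ δ / (A + 1) := min_le_right _ _
    have hdiv : δ / (A + 1) * (A + 1) = δ := div_mul_cancel₀ _ (ne_of_gt hA1)
    nlinarith [mul_le_mul_of_nonneg_right ht2 hA0]
  -- conclude
  have hn0 : (0 : ℝ) ≤ 1 / (n : ℝ) := by positivity
  have h8 : (1 / (n : ℝ)) * A ≤ (1 / (n : ℝ)) * (2 * M * Ss) :=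
    mul_le_mul_of_nonneg_left (by linarith) hn0
  calc (1 / (n : ℝ)) * A ≤ (1 / (n : ℝ)) * (2 * M * Ss) := h8
    _ = (2 / (n : ℝ)) * M * Ss := by ring
end
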